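/- The relator of G_{1,r}, namely the element [x, y x^r y^{-2} x^r y] of the free group F_2 = ⟨x,y⟩, is congruent modulo γ_5(F_2) to [y,x,y,x]^r [y,x,x,x]^{-r^2}. -/

import Mathlib

/-!
Work in `Q = F₂/γ₅`, where `γ₄` is central and `u ↦ [g, u]` is a homomorphism on `γ₂` killing
`γ₄`. With `c₁ = [x^r, y⁻¹]` and `c₂ = [x^r, y]` one has `y x^r y⁻² x^r y = x^{2r} c₁ [c₁, x^r] c₂`,
so the relator is `[x, c₁] [x, [c₁, x^r]] [x, c₂]`. Expanding `[x^r, ·]` by the Hall formula of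
class 4, the weight-three terms `[x, [x, y]]^{∓r}` of `[x, c₁]` and `[x, c₂]` cancel and the
weight-four terms leave `[y,x,y,x]^r`, while the correction `[x, [c₁, x^r]]` contributes
`[y,x,x,x]^{-r²}`.
-/

namespace Stmt12

abbrev F := FreeGroup (Fin 2)

def x : F := FreeGroup.of 0
def y : F := FreeGroup.of 1

def comm (a b : F) : F := a⁻¹ * b⁻¹ * a * b

/-- The relator `[x, y x^r y⁻² x^r y]`. -/
def C (r : ℕ) : F := comm x (y * x ^ r * y⁻¹ * y⁻¹ * x ^ r * y)

def D : F := comm (comm (comm y x) y) x    -- [y,x,y,x]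
def E : F := comm (comm (comm y x) x) x    -- [y,x,x,x]

end Stmt12

namespace Subgroup

variable {G : Type*} [Group G]

theorem commutator_commutator_le_of_rotate {H₁ H₂ H₃ N : Subgroup G} [N.Normal]
    (h1 : ⁅⁅H₂, H₃⁆, H₁⁆ ≤ N) (h2 : ⁅⁅H₃, H₁⁆, H₂⁆ ≤ N) : ⁅⁅H₁, H₂⁆, H₃⁆ ≤ N := by
  rw [← QuotientGroup.ker_mk' N, ← map_eq_bot_iff] at h1 h2 ⊢
  simp only [map_commutator] at h1 h2 ⊢
  exact commutator_commutator_eq_bot_of_rotate h1 h2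

theorem commutator_lowerCentralSeries_le (i j : ℕ) :
    ⁅(⊤ : Subgroup G).lowerCentralSeries i, (⊤ : Subgroup G).lowerCentralSeries j⁆ ≤
      (⊤ : Subgroup G).lowerCentralSeries (i + j + 1) := by
  induction j generalizing i with
  | zero => exact le_rfl
  | succ j ih =>
    rw [lowerCentralSeries_succ, commutator_comm]
    apply commutator_commutator_le_of_rotate
    · rw [commutator_comm ⊤, ← lowerCentralSeries_succ,
        show i + (j + 1) + 1 = i + 1 + j + 1 by omega]
      exact ih (i + 1)
    · exact commutator_mono (ih i) le_rfl

theorem lowerCentralSeries_quotient_lowerCentralSeries_eq_bot (n : ℕ) :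
    (⊤ : Subgroup (G ⧸ (⊤ : Subgroup G).lowerCentralSeries n)).lowerCentralSeries n = ⊥ := by
  rw [← map_top_of_surjective _ (QuotientGroup.mk'_surjective _), ← map_lowerCentralSeries,
    map_eq_bot_iff, QuotientGroup.ker_mk']

end Subgroup

namespace Stmt12

open scoped commutatorElement

-- Mathlib indexes the lower central series from `0`: `γ n` is the paper's `γ_{n+1}`.
local notation "γ" n:max => Subgroup.lowerCentralSeries ⊤ n

section Commutator

variable {G H : Type*} [Group G] [Group H]

def lcomm (a b : G) : G := a⁻¹ * b⁻¹ * a * b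

theorem map_lcomm (f : G →* H) (a b : G) : f (lcomm a b) = lcomm (f a) (f b) := by
  simp only [lcomm, map_mul, map_inv]

theorem lcomm_eq_commutatorElement (a b : G) : lcomm a b = ⁅a⁻¹, b⁻¹⁆ := by
  rw [lcomm, commutatorElement_def, inv_inv, inv_inv]

theorem lcomm_inv (a b : G) : (lcomm a b)⁻¹ = lcomm b a := by
  simp only [lcomm]; group

theorem lcomm_mul_left (g h v : G) :
    lcomm (g * h) v = lcomm g v * lcomm (lcomm g v) h * lcomm h v := by
  simp only [lcomm]; group

theorem lcomm_mul_right (u g h : G) :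
    lcomm u (g * h) = lcomm u h * lcomm u g * lcomm (lcomm u g) h := by
  simp only [lcomm]; group

theorem lcomm_inv_right (u v : G) :
    lcomm u v⁻¹ = (lcomm u v)⁻¹ * lcomm (lcomm u v)⁻¹ v⁻¹ := by
  simp only [lcomm]; group

theorem mem_lowerCentralSeries_zero (g : G) : g ∈ γ 0 := Subgroup.mem_top g

theorem lcomm_mem_lowerCentralSeries {i j k : ℕ} {u v : G} (hu : u ∈ γ i) (hv : v ∈ γ j)
    (hk : k ≤ i + j + 1 := by omega) : lcomm u v ∈ γ k := by
  rw [lcomm_eq_commutatorElement]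
  exact Subgroup.lowerCentralSeries_antitone ⊤ hk <| Subgroup.commutator_lowerCentralSeries_le i j
    (Subgroup.commutator_mem_commutator (inv_mem hu) (inv_mem hv))

end Commutator

section ClassFour

variable {G : Type*} [Group G] (hG : (⊤ : Subgroup G).lowerCentralSeries 4 = ⊥)
include hG

theorem lcomm_eq_one {i j : ℕ} {u v : G} (hu : u ∈ γ i) (hv : v ∈ γ j)
    (h : 3 ≤ i + j := by omega) : lcomm u v = 1 := by
  have : lcomm u v ∈ γ 4 := lcomm_mem_lowerCentralSeries hu hv
  rwa [hG, Subgroup.mem_bot] at this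

theorem commute_of_mem {i j : ℕ} {u v : G} (hu : u ∈ γ i) (hv : v ∈ γ j)
    (h : 3 ≤ i + j := by omega) : Commute u v := by
  rw [← Commute.inv_inv_iff, ← commutatorElement_eq_one_iff_commute,
    ← lcomm_eq_commutatorElement]
  exact lcomm_eq_one hG hu hv h

theorem lcomm_mul_right_of_mem (g : G) {u v : G} (hu : u ∈ γ 1) (hv : v ∈ γ 1) :
    lcomm g (u * v) = lcomm g u * lcomm g v := by
  have hgu : lcomm g u ∈ γ 2 := lcomm_mem_lowerCentralSeries (mem_lowerCentralSeries_zero g) hu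
  have hgv : lcomm g v ∈ γ 2 := lcomm_mem_lowerCentralSeries (mem_lowerCentralSeries_zero g) hv
  rw [lcomm_mul_right, lcomm_eq_one hG hgu hv, mul_one, (commute_of_mem hG hgv hgu).eq]

theorem lcomm_mul_left_of_mem (g : G) {u v : G} (hu : u ∈ γ 1) (hv : v ∈ γ 1) :
    lcomm (u * v) g = lcomm u g * lcomm v g := by
  have hug : lcomm u g ∈ γ 2 := lcomm_mem_lowerCentralSeries hu (mem_lowerCentralSeries_zero g)
  rw [lcomm_mul_left, lcomm_eq_one hG hug hv, mul_one]

def lcommRightHom (g : G) : (⊤ : Subgroup G).lowerCentralSeries 1 →* G :=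
  MonoidHom.mk' (fun u => lcomm g u) fun u v => lcomm_mul_right_of_mem hG g u.2 v.2

def lcommLeftHom (g : G) : (⊤ : Subgroup G).lowerCentralSeries 1 →* G :=
  MonoidHom.mk' (fun u => lcomm u g) fun u v => lcomm_mul_left_of_mem hG g u.2 v.2

theorem lcomm_pow_right_of_mem (g : G) {u : G} (hu : u ∈ γ 1) (n : ℕ) :
    lcomm g (u ^ n) = lcomm g u ^ n :=
  map_pow (lcommRightHom hG g) ⟨u, hu⟩ n

theorem lcomm_inv_right_of_mem (g : G) {u : G} (hu : u ∈ γ 1) :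
    lcomm g u⁻¹ = (lcomm g u)⁻¹ :=
  map_inv (lcommRightHom hG g) ⟨u, hu⟩

theorem lcomm_pow_left_of_mem (g : G) {u : G} (hu : u ∈ γ 1) (n : ℕ) :
    lcomm (u ^ n) g = lcomm u g ^ n :=
  map_pow (lcommLeftHom hG g) ⟨u, hu⟩ n

theorem lcomm_inv_left_of_mem (g : G) {u : G} (hu : u ∈ γ 1) :
    lcomm u⁻¹ g = (lcomm u g)⁻¹ :=
  map_inv (lcommLeftHom hG g) ⟨u, hu⟩

theorem lcomm_lcomm_comm (g h k : G) : lcomm g (lcomm h k) = (lcomm g (lcomm k h))⁻¹ := by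
  rw [← lcomm_inv k h, lcomm_inv_right_of_mem hG g
    (lcomm_mem_lowerCentralSeries (mem_lowerCentralSeries_zero k) (mem_lowerCentralSeries_zero h))]

theorem lcomm_pow_left_hall (X W : G) (n : ℕ) :
    lcomm (X ^ n) W = lcomm X W ^ n * lcomm (lcomm X W) X ^ n.choose 2 *
      lcomm (lcomm (lcomm X W) X) X ^ n.choose 3 := by
  set a := lcomm X W
  set b := lcomm a X
  set c := lcomm b X
  have ha : a ∈ γ 1 :=
    lcomm_mem_lowerCentralSeries (mem_lowerCentralSeries_zero X) (mem_lowerCentralSeries_zero W)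
  have hb : b ∈ γ 2 := lcomm_mem_lowerCentralSeries ha (mem_lowerCentralSeries_zero X)
  have hc : c ∈ γ 3 := lcomm_mem_lowerCentralSeries hb (mem_lowerCentralSeries_zero X)
  have hb1 : b ∈ γ 1 := lcomm_mem_lowerCentralSeries ha (mem_lowerCentralSeries_zero X)
  have hc1 : c ∈ γ 1 := lcomm_mem_lowerCentralSeries hb (mem_lowerCentralSeries_zero X)
  have hc2 : c ∈ γ 2 := lcomm_mem_lowerCentralSeries hb (mem_lowerCentralSeries_zero X)
  induction n with
  | zero => simp [lcomm]
  | succ n ih =>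
    have hstep : lcomm (lcomm (X ^ n) W) X = b ^ n * c ^ n.choose 2 := by
      rw [ih, lcomm_mul_left_of_mem hG _ (mul_mem (pow_mem ha _) (pow_mem hb1 _)) (pow_mem hc1 _),
        lcomm_mul_left_of_mem hG _ (pow_mem ha _) (pow_mem hb1 _), lcomm_pow_left_of_mem hG _ ha,
        lcomm_pow_left_of_mem hG _ hb1, lcomm_pow_left_of_mem hG _ hc1,
        lcomm_eq_one hG hc (mem_lowerCentralSeries_zero X), one_pow, mul_one]
    have hm : b ^ n.choose 2 * c ^ n.choose 3 * (b ^ n * c ^ n.choose 2) ∈ γ 2 :=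
      mul_mem (mul_mem (pow_mem hb _) (pow_mem hc2 _)) (mul_mem (pow_mem hb _) (pow_mem hc2 _))
    have h2 : (n + 1).choose 2 = n.choose 2 + n := by
      rw [Nat.choose_succ_succ', Nat.choose_one_right, add_comm]
    have h3 : (n + 1).choose 3 = n.choose 3 + n.choose 2 := by
      rw [Nat.choose_succ_succ', add_comm]
    rw [pow_succ, lcomm_mul_left, hstep, ih, h2, h3]
    calc a ^ n * b ^ n.choose 2 * c ^ n.choose 3 * (b ^ n * c ^ n.choose 2) * a
        = a ^ n * ((b ^ n.choose 2 * c ^ n.choose 3 * (b ^ n * c ^ n.choose 2)) * a) := by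
          simp only [mul_assoc]
      _ = a ^ (n + 1) * (b ^ n.choose 2 * (c ^ n.choose 3 * b ^ n) * c ^ n.choose 2) := by
          rw [(commute_of_mem hG hm ha).eq, pow_succ]; simp only [mul_assoc]
      _ = a ^ (n + 1) * b ^ (n.choose 2 + n) * c ^ (n.choose 3 + n.choose 2) := by
          rw [((commute_of_mem hG hc hb).pow_pow _ _).eq, pow_add b, pow_add c]
          simp only [mul_assoc]

theorem lcomm_lcomm_pow_left (g X W : G) (n : ℕ) :
    lcomm g (lcomm (X ^ n) W) =
      lcomm g (lcomm X W) ^ n * lcomm g (lcomm (lcomm X W) X) ^ n.choose 2 := by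
  have ha : lcomm X W ∈ γ 1 :=
    lcomm_mem_lowerCentralSeries (mem_lowerCentralSeries_zero X) (mem_lowerCentralSeries_zero W)
  have hb : lcomm (lcomm X W) X ∈ γ 1 :=
    lcomm_mem_lowerCentralSeries ha (mem_lowerCentralSeries_zero X)
  have hb2 : lcomm (lcomm X W) X ∈ γ 2 :=
    lcomm_mem_lowerCentralSeries ha (mem_lowerCentralSeries_zero X)
  have hc : lcomm (lcomm (lcomm X W) X) X ∈ γ 3 :=
    lcomm_mem_lowerCentralSeries hb2 (mem_lowerCentralSeries_zero X)
  have hc1 : lcomm (lcomm (lcomm X W) X) X ∈ γ 1 :=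
    lcomm_mem_lowerCentralSeries hb2 (mem_lowerCentralSeries_zero X)
  rw [lcomm_pow_left_hall hG, lcomm_mul_right_of_mem hG g (mul_mem (pow_mem ha _) (pow_mem hb _))
      (pow_mem hc1 _), lcomm_mul_right_of_mem hG g (pow_mem ha _) (pow_mem hb _),
    lcomm_pow_right_of_mem hG g ha, lcomm_pow_right_of_mem hG g hb,
    lcomm_eq_one hG (mem_lowerCentralSeries_zero g) (pow_mem hc _), mul_one]

theorem lcomm_lcomm_inv_right (g h k : G) :
    lcomm g (lcomm h k⁻¹) = (lcomm g (lcomm h k))⁻¹ * lcomm g (lcomm (lcomm h k) k) := by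
  set a := lcomm h k
  have ha : a ∈ γ 1 :=
    lcomm_mem_lowerCentralSeries (mem_lowerCentralSeries_zero h) (mem_lowerCentralSeries_zero k)
  have hak : lcomm a k⁻¹ ∈ γ 1 := lcomm_mem_lowerCentralSeries ha (mem_lowerCentralSeries_zero _)
  have hak' : lcomm a⁻¹ k⁻¹ ∈ γ 1 :=
    lcomm_mem_lowerCentralSeries (inv_mem ha) (mem_lowerCentralSeries_zero _)
  have hak1 : lcomm a k ∈ γ 1 := lcomm_mem_lowerCentralSeries ha (mem_lowerCentralSeries_zero _)
  have hak2 : lcomm a k ∈ γ 2 := lcomm_mem_lowerCentralSeries ha (mem_lowerCentralSeries_zero _)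
  have hm : lcomm (lcomm a k)⁻¹ k⁻¹ ∈ γ 3 :=
    lcomm_mem_lowerCentralSeries (inv_mem hak2) (mem_lowerCentralSeries_zero _)
  have hm1 : lcomm (lcomm a k)⁻¹ k⁻¹ ∈ γ 1 :=
    lcomm_mem_lowerCentralSeries (inv_mem hak2) (mem_lowerCentralSeries_zero _)
  rw [lcomm_inv_right h k, lcomm_mul_right_of_mem hG g (inv_mem ha) hak',
    lcomm_inv_right_of_mem hG g ha, lcomm_inv_left_of_mem hG _ ha, lcomm_inv_right_of_mem hG g hak,
    lcomm_inv_right a k, lcomm_mul_right_of_mem hG g (inv_mem hak1) hm1,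
    lcomm_inv_right_of_mem hG g hak1, lcomm_eq_one hG (mem_lowerCentralSeries_zero g) hm, mul_one,
    inv_inv]

theorem lcomm_lcomm_lcomm_inv_right (g h k l : G) :
    lcomm g (lcomm (lcomm h k⁻¹) l) = (lcomm g (lcomm (lcomm h k) l))⁻¹ := by
  set a := lcomm h k
  have ha : a ∈ γ 1 :=
    lcomm_mem_lowerCentralSeries (mem_lowerCentralSeries_zero h) (mem_lowerCentralSeries_zero k)
  have hm : lcomm a⁻¹ k⁻¹ ∈ γ 2 :=
    lcomm_mem_lowerCentralSeries (inv_mem ha) (mem_lowerCentralSeries_zero _)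
  have hm1 : lcomm a⁻¹ k⁻¹ ∈ γ 1 :=
    lcomm_mem_lowerCentralSeries (inv_mem ha) (mem_lowerCentralSeries_zero _)
  have hal : lcomm a l ∈ γ 1 := lcomm_mem_lowerCentralSeries ha (mem_lowerCentralSeries_zero _)
  have hml : lcomm (lcomm a⁻¹ k⁻¹) l ∈ γ 3 :=
    lcomm_mem_lowerCentralSeries hm (mem_lowerCentralSeries_zero _)
  have hml1 : lcomm (lcomm a⁻¹ k⁻¹) l ∈ γ 1 :=
    lcomm_mem_lowerCentralSeries hm (mem_lowerCentralSeries_zero _)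
  rw [lcomm_inv_right h k, lcomm_mul_left_of_mem hG l (inv_mem ha) hm1,
    lcomm_inv_left_of_mem hG l ha, lcomm_mul_right_of_mem hG g (inv_mem hal) hml1,
    lcomm_inv_right_of_mem hG g hal, lcomm_eq_one hG (mem_lowerCentralSeries_zero g) hml, mul_one]

theorem lcomm_lcomm_lcomm_swap (X Y Z : G) :
    lcomm (lcomm (lcomm Y X) Z) X = lcomm X (lcomm (lcomm X Y) Z) := by
  have ha : lcomm X Y ∈ γ 1 :=
    lcomm_mem_lowerCentralSeries (mem_lowerCentralSeries_zero X) (mem_lowerCentralSeries_zero Y)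
  have haZ : lcomm (lcomm X Y) Z ∈ γ 1 :=
    lcomm_mem_lowerCentralSeries ha (mem_lowerCentralSeries_zero Z)
  rw [← lcomm_inv X Y, lcomm_inv_left_of_mem hG Z ha, lcomm_inv_left_of_mem hG X haZ, lcomm_inv]

theorem lcomm_lcomm_pow_inv_mul_lcomm_lcomm_pow (X Y : G) (r : ℕ) :
    lcomm X (lcomm (X ^ r) Y⁻¹) * lcomm X (lcomm (X ^ r) Y) =
      lcomm X (lcomm (lcomm X Y) Y) ^ r := by
  have ha : lcomm X Y ∈ γ 1 :=
    lcomm_mem_lowerCentralSeries (mem_lowerCentralSeries_zero X) (mem_lowerCentralSeries_zero Y)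
  have hp : lcomm X (lcomm X Y) ∈ γ 2 :=
    lcomm_mem_lowerCentralSeries (mem_lowerCentralSeries_zero X) ha
  have hq : lcomm X (lcomm (lcomm X Y) Y) ∈ γ 3 :=
    lcomm_mem_lowerCentralSeries (mem_lowerCentralSeries_zero X)
      (lcomm_mem_lowerCentralSeries ha (mem_lowerCentralSeries_zero Y) : _ ∈ γ 2)
  have hs : lcomm X (lcomm (lcomm X Y) X) ∈ γ 3 :=
    lcomm_mem_lowerCentralSeries (mem_lowerCentralSeries_zero X)
      (lcomm_mem_lowerCentralSeries ha (mem_lowerCentralSeries_zero X) : _ ∈ γ 2)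
  rw [lcomm_lcomm_pow_left hG X X Y⁻¹, lcomm_lcomm_inv_right hG, lcomm_lcomm_lcomm_inv_right hG,
    lcomm_lcomm_pow_left hG X X Y]
  set p := lcomm X (lcomm X Y)
  set q := lcomm X (lcomm (lcomm X Y) Y)
  set s := lcomm X (lcomm (lcomm X Y) X)
  have hqp : Commute q p⁻¹ := commute_of_mem hG hq (inv_mem hp)
  calc (p⁻¹ * q) ^ r * s⁻¹ ^ r.choose 2 * (p ^ r * s ^ r.choose 2)
      = q ^ r * p⁻¹ ^ r * (s⁻¹ ^ r.choose 2 * p ^ r) * s ^ r.choose 2 := by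
        rw [← hqp.eq, hqp.mul_pow]; simp only [mul_assoc]
    _ = q ^ r * p⁻¹ ^ r * (p ^ r * s⁻¹ ^ r.choose 2) * s ^ r.choose 2 := by
        rw [(commute_of_mem hG (pow_mem (inv_mem hs) _) (mem_lowerCentralSeries_zero (p ^ r))).eq]
    _ = q ^ r := by group

theorem lcomm_lcomm_lcomm_pow_inv_pow (X Y : G) (r : ℕ) :
    lcomm X (lcomm (lcomm (X ^ r) Y⁻¹) (X ^ r)) = (lcomm X (lcomm (lcomm X Y) X) ^ r ^ 2)⁻¹ := by
  set c₁ := lcomm (X ^ r) Y⁻¹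
  set a := lcomm X Y
  set p := lcomm X a
  set q := lcomm X (lcomm a Y)
  set s := lcomm X (lcomm a X)
  have ha : a ∈ γ 1 :=
    lcomm_mem_lowerCentralSeries (mem_lowerCentralSeries_zero X) (mem_lowerCentralSeries_zero Y)
  have hp : p ∈ γ 1 := lcomm_mem_lowerCentralSeries (mem_lowerCentralSeries_zero X) ha
  have hq : q ∈ γ 3 := lcomm_mem_lowerCentralSeries (mem_lowerCentralSeries_zero X)
    (lcomm_mem_lowerCentralSeries ha (mem_lowerCentralSeries_zero Y) : _ ∈ γ 2)
  have hs : s ∈ γ 3 := lcomm_mem_lowerCentralSeries (mem_lowerCentralSeries_zero X)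
    (lcomm_mem_lowerCentralSeries ha (mem_lowerCentralSeries_zero X) : _ ∈ γ 2)
  have hq1 : q ∈ γ 1 := Subgroup.lowerCentralSeries_antitone ⊤ (by omega) hq
  have hs1 : s ∈ γ 1 := Subgroup.lowerCentralSeries_antitone ⊤ (by omega) hs
  have hc₁ : c₁ ∈ γ 1 :=
    lcomm_mem_lowerCentralSeries (mem_lowerCentralSeries_zero _) (mem_lowerCentralSeries_zero _)
  have hXc₁ : lcomm (lcomm X c₁) X ∈ γ 3 := lcomm_mem_lowerCentralSeries
    (lcomm_mem_lowerCentralSeries (mem_lowerCentralSeries_zero X) hc₁ : _ ∈ γ 2)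
    (mem_lowerCentralSeries_zero X)
  have hφc₁ : lcomm X c₁ = (p⁻¹ * q) ^ r * s⁻¹ ^ r.choose 2 := by
    rw [lcomm_lcomm_pow_left hG, lcomm_lcomm_inv_right hG, lcomm_lcomm_lcomm_inv_right hG]
  have hφp : lcomm X p = s⁻¹ := lcomm_lcomm_comm hG X X a
  have hφφc₁ : lcomm X (lcomm X c₁) = s ^ r := by
    rw [hφc₁, lcomm_mul_right_of_mem hG X (pow_mem (mul_mem (inv_mem hp) hq1) _)
        (pow_mem (inv_mem hs1) _),
      lcomm_eq_one hG (mem_lowerCentralSeries_zero X) (pow_mem (inv_mem hs) _), mul_one,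
      lcomm_pow_right_of_mem hG X (mul_mem (inv_mem hp) hq1),
      lcomm_mul_right_of_mem hG X (inv_mem hp) hq1,
      lcomm_eq_one hG (mem_lowerCentralSeries_zero X) hq, mul_one,
      lcomm_inv_right_of_mem hG X hp, hφp, inv_inv]
  rw [← lcomm_inv (X ^ r) c₁, lcomm_inv_right_of_mem hG X
      (lcomm_mem_lowerCentralSeries (mem_lowerCentralSeries_zero _) hc₁),
    lcomm_lcomm_pow_left hG, lcomm_eq_one hG (mem_lowerCentralSeries_zero X) hXc₁, one_pow,
    mul_one, hφφc₁, ← pow_mul, sq]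

theorem lcomm_relator_eq (X Y : G) (r : ℕ) :
    lcomm X (Y * X ^ r * Y⁻¹ * Y⁻¹ * X ^ r * Y) =
      lcomm (lcomm (lcomm Y X) Y) X ^ r * (lcomm (lcomm (lcomm Y X) X) X ^ (r ^ 2))⁻¹ := by
  have hc₁ : lcomm (X ^ r) Y⁻¹ ∈ γ 1 :=
    lcomm_mem_lowerCentralSeries (mem_lowerCentralSeries_zero _) (mem_lowerCentralSeries_zero _)
  have hc₂ : lcomm (X ^ r) Y ∈ γ 1 :=
    lcomm_mem_lowerCentralSeries (mem_lowerCentralSeries_zero _) (mem_lowerCentralSeries_zero _)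
  have hc₁X : lcomm (lcomm (X ^ r) Y⁻¹) (X ^ r) ∈ γ 1 :=
    lcomm_mem_lowerCentralSeries hc₁ (mem_lowerCentralSeries_zero _)
  have hcorr : lcomm X (lcomm (lcomm (X ^ r) Y⁻¹) (X ^ r)) ∈ γ 3 :=
    lcomm_mem_lowerCentralSeries (mem_lowerCentralSeries_zero X)
      (lcomm_mem_lowerCentralSeries hc₁ (mem_lowerCentralSeries_zero _) : _ ∈ γ 2)
  have hword : lcomm X (Y * X ^ r * Y⁻¹ * Y⁻¹ * X ^ r * Y) =
      lcomm X (lcomm (X ^ r) Y⁻¹ * lcomm (lcomm (X ^ r) Y⁻¹) (X ^ r) * lcomm (X ^ r) Y) := by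
    simp only [lcomm]; group
  rw [hword, lcomm_mul_right_of_mem hG X (mul_mem hc₁ hc₁X) hc₂,
    lcomm_mul_right_of_mem hG X hc₁ hc₁X, mul_assoc,
    (commute_of_mem hG hcorr (mem_lowerCentralSeries_zero _)).eq, ← mul_assoc,
    lcomm_lcomm_pow_inv_mul_lcomm_lcomm_pow hG, lcomm_lcomm_lcomm_pow_inv_pow hG,
    lcomm_lcomm_lcomm_swap hG, lcomm_lcomm_lcomm_swap hG]

end ClassFour

theorem comm_eq_lcomm (a b : F) : comm a b = lcomm a b := rfl

theorem relator_mod_gamma5_general (r : ℕ) :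
    C r * (D ^ (r : ℤ) * E ^ (-((r : ℤ) ^ 2)))⁻¹ ∈ (⊤ : Subgroup F).lowerCentralSeries 4 := by
  have hQ := Subgroup.lowerCentralSeries_quotient_lowerCentralSeries_eq_bot (G := F) 4
  rw [← QuotientGroup.ker_mk' ((⊤ : Subgroup F).lowerCentralSeries 4), MonoidHom.mem_ker]
  simp only [C, D, E, comm_eq_lcomm, map_mul, map_inv, map_zpow, map_lcomm, map_pow]
  rw [lcomm_relator_eq hQ, zpow_neg, ← Nat.cast_pow, zpow_natCast, zpow_natCast, mul_inv_eq_one]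

theorem relator_mod_gamma5 (r : ℕ) (hr : 0 < r) :
    C r * (D ^ (r : ℤ) * E ^ (-((r : ℤ) ^ 2)))⁻¹ ∈ (⊤ : Subgroup F).lowerCentralSeries 4 :=
  relator_mod_gamma5_general r

end Stmt12
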